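/- arXiv:1507.06114 — 6 statements merged into one kernel-verified Lean document; each statement's English description precedes it below -/
import Mathlib

section
/- Let H be a complex Hilbert space and Q a bounded self-adjoint operator on H such that ‖Q² − Q‖ ≤ δ for some δ with 0 ≤ δ < 1/4. Then there exists an orthogonal projection P on H (P = P* = P²) such that P commutes with Q and ‖P − Q‖ ≤ 2δ. -/
/-- If `Q` is a bounded self-adjoint operator with `‖Q² - Q‖ ≤ δ < 1/4`, then there is
an orthogonal projection `P` commuting with `Q` such that `‖P - Q‖ ≤ 2δ`. -/
theorem exists_projection_near_almost_projection
    {H : Type*} [NormedAddCommGroup H] [InnerProductSpace ℂ H] [CompleteSpace H]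
    (Q : H →L[ℂ] H) (hQ : IsSelfAdjoint Q)
    (δ : ℝ) (hδ0 : 0 ≤ δ) (hδ : δ < 1/4)
    (hQQ : ‖Q * Q - Q‖ ≤ δ) :
    ∃ P : H →L[ℂ] H, IsSelfAdjoint P ∧ P * P = P ∧ Commute P Q ∧ ‖P - Q‖ ≤ 2*δ := by
  by_cases htriv : Subsingleton H
  · refine ⟨0, by exact .zero _, by simp, Commute.zero_left Q, ?_⟩
    have : Q = 0 := by ext x; exact Subsingleton.elim _ _
    simp [this]; linarith
  have : Nontrivial H := not_subsingleton_iff_nontrivial.mp htriv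
  set f : ℝ → ℝ := fun x => if (1:ℝ)/2 ≤ x then 1 else 0 with hf
  have hg : cfc (fun x : ℝ => x^2 - x) Q = Q * Q - Q := by
    rw [cfc_sub (fun x : ℝ => x^2) (fun x : ℝ => x) Q (by fun_prop) (by fun_prop),
      cfc_pow_id Q 2, cfc_id' ℝ Q, sq]
  have hspec : ∀ x ∈ spectrum ℝ Q, |x^2 - x| ≤ δ := by
    intro x hx
    have : x^2 - x ∈ spectrum ℝ (Q * Q - Q) := by
      rw [← hg, cfc_map_spectrum (fun x : ℝ => x^2 - x) Q]
      exact ⟨x, hx, rfl⟩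
    calc |x^2 - x| = ‖x^2 - x‖ := rfl
      _ ≤ ‖Q * Q - Q‖ := spectrum.norm_le_norm_of_mem this
      _ ≤ δ := hQQ
  have hhalf : ∀ x ∈ spectrum ℝ Q, x ≠ 1/2 := by
    intro x hx h
    have h2 := hspec x hx
    rw [h] at h2
    rw [show |((1:ℝ)/2)^2 - 1/2| = 1/4 by rw [abs_of_nonpos] <;> norm_num] at h2
    linarith
  have hfc : ContinuousOn f (spectrum ℝ Q) := by
    intro x hx
    rcases lt_or_gt_of_ne (hhalf x hx) with h | h
    · refine ContinuousAt.continuousWithinAt ?_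
      refine (continuousAt_const (y := (0:ℝ))).congr ?_
      filter_upwards [eventually_lt_nhds h] with y hy
      exact (if_neg (by linarith)).symm
    · refine ContinuousAt.continuousWithinAt ?_
      refine (continuousAt_const (y := (1:ℝ))).congr ?_
      filter_upwards [eventually_gt_nhds h] with y hy
      exact (if_pos (by linarith)).symm
  refine ⟨cfc f Q, cfc_predicate f Q, ?_, ?_, ?_⟩
  · rw [← cfc_mul f f Q hfc hfc]
    refine cfc_congr fun x _ => ?_
    simp only [hf]
    split <;> norm_num
  · rw [Commute]
    calc cfc f Q * Q = cfc f Q * cfc (fun x : ℝ => x) Q := by rw [cfc_id' ℝ Q]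
      _ = cfc (fun x => f x * x) Q := (cfc_mul f _ Q hfc (by fun_prop)).symm
      _ = cfc (fun x => x * f x) Q := cfc_congr fun x _ => mul_comm _ _
      _ = cfc (fun x : ℝ => x) Q * cfc f Q := cfc_mul _ f Q (by fun_prop) hfc
      _ = Q * cfc f Q := by rw [cfc_id' ℝ Q]
  · have heq : cfc f Q - Q = cfc (fun x => f x - x) Q := by
      rw [cfc_sub f (fun x : ℝ => x) Q hfc (by fun_prop), cfc_id' ℝ Q]
    rw [heq]
    refine norm_cfc_le (by linarith) fun x hx => ?_
    have hb := hspec x hx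
    rw [abs_le] at hb
    by_cases h : (1:ℝ)/2 ≤ x
    · simp only [hf, if_pos h]
      rw [Real.norm_eq_abs, abs_le]
      constructor <;> nlinarith
    · simp only [hf, if_neg h]
      rw [Real.norm_eq_abs, abs_le]
      push_neg at h
      constructor <;> nlinarith
end

section
/- Let H be a complex Hilbert space, let A and B be bounded self-adjoint operators on H, and let T be any bounded operator on H. Then for every t ∈ ℝ, ‖e^{−itA} T − T e^{−itB}‖ ≤ |t| · ‖A T − T B‖. -/
/-!
The function `g s = e^{sX} T e^{(t-s)Y}` interpolates between `g 0 = T e^{tY}` and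
`g t = e^{tX} T`, and its derivative is `e^{sX} (XT - TY) e^{(t-s)Y}`. When both groups are
contractions the derivative has norm at most `‖XT - TY‖`, so the mean value inequality gives
`‖e^{tX} T - T e^{tY}‖ ≤ |t| ‖XT - TY‖`. For self-adjoint `A`, `B` the groups `e^{-itA}`,
`e^{-itB}` are unitary, hence contractions, with generators `X = -iA`, `Y = -iB`.
-/

open NormedSpace

section Duhamel

variable {E : Type*} [NormedRing E] [NormedAlgebra ℝ E] [CompleteSpace E]

theorem hasDerivAt_exp_smul_mul_mul_exp_smul (X Y T : E) (t s : ℝ) :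
    HasDerivAt (fun s : ℝ => exp (s • X) * T * exp ((t - s) • Y))
      (exp (s • X) * (X * T - T * Y) * exp ((t - s) • Y)) s := by
  have hY : HasDerivAt (fun s : ℝ => exp ((t - s) • Y)) (-(Y * exp ((t - s) • Y))) s := by
    simpa [Function.comp_def] using
      (hasDerivAt_exp_smul_const' Y (t - s)).scomp s ((hasDerivAt_id s).const_sub t)
  refine (((hasDerivAt_exp_smul_const X s).mul_const T).mul hY).congr_deriv ?_
  noncomm_ring

theorem norm_exp_smul_mul_sub_mul_exp_smul_le {X Y : E} (hX : ∀ s : ℝ, ‖exp (s • X)‖ ≤ 1)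
    (hY : ∀ s : ℝ, ‖exp (s • Y)‖ ≤ 1) (T : E) (t : ℝ) :
    ‖exp (t • X) * T - T * exp (t • Y)‖ ≤ |t| * ‖X * T - T * Y‖ := by
  have hbound (s : ℝ) :
      ‖exp (s • X) * (X * T - T * Y) * exp ((t - s) • Y)‖ ≤ ‖X * T - T * Y‖ :=
    calc _ ≤ ‖exp (s • X)‖ * ‖X * T - T * Y‖ * ‖exp ((t - s) • Y)‖ := norm_mul₃_le
      _ ≤ 1 * ‖X * T - T * Y‖ * 1 := by gcongr; exacts [hX s, hY _]
      _ = ‖X * T - T * Y‖ := by ring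
  have := Convex.norm_image_sub_le_of_norm_hasDerivWithin_le
    (fun s _ => (hasDerivAt_exp_smul_mul_mul_exp_smul X Y T t s).hasDerivWithinAt)
    (fun s _ => hbound s) convex_univ (Set.mem_univ 0) (Set.mem_univ t)
  simpa [mul_comm |t|] using this

end Duhamel

theorem CStarRing.norm_le_one_of_mem_unitary {E : Type*} [NormedRing E] [StarRing E]
    [CStarRing E] {u : E} (hu : u ∈ unitary E) : ‖u‖ ≤ 1 := by
  rcases subsingleton_or_nontrivial E with _ | _
  · simp [Subsingleton.elim u 0]
  · exact (norm_of_mem_unitary hu).le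

section CStarAlgebra

open Complex

variable {E : Type*} [CStarAlgebra E] {a b : E}

theorem norm_exp_real_smul_I_smul_le_one (ha : IsSelfAdjoint a) (s : ℝ) :
    ‖exp (s • I • a)‖ ≤ 1 := by
  have hu := (selfAdjoint.expUnitary ⟨s • a, (IsSelfAdjoint.all s).smul ha⟩).prop
  rw [selfAdjoint.expUnitary_coe, smul_comm] at hu
  exact CStarRing.norm_le_one_of_mem_unitary hu

theorem norm_exp_neg_I_smul_mul_sub_mul_exp_neg_I_smul_le (ha : IsSelfAdjoint a)
    (hb : IsSelfAdjoint b) (x : E) (t : ℝ) :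
    ‖exp ((-(I * t)) • a) * x - x * exp ((-(I * t)) • b)‖ ≤ |t| * ‖a * x - x * b‖ := by
  have hsmul (c : E) : (-(I * t)) • c = t • I • -c := by
    rw [smul_neg, ← smul_neg, ← coe_smul, smul_smul, mul_comm, neg_smul, smul_neg]
  have hgen : I • -a * x - x * I • -b = (-I) • (a * x - x * b) := by
    simp only [smul_sub, neg_mul, mul_neg, smul_mul_assoc, mul_smul_comm, smul_neg, neg_smul]
  calc _ ≤ |t| * ‖I • -a * x - x * I • -b‖ := by
        simpa only [← hsmul] using norm_exp_smul_mul_sub_mul_exp_smul_le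
          (norm_exp_real_smul_I_smul_le_one ha.neg) (norm_exp_real_smul_I_smul_le_one hb.neg) x t
    _ = |t| * ‖a * x - x * b‖ := by rw [hgen, norm_smul, norm_neg, norm_I, one_mul]

end CStarAlgebra

/-- Duhamel estimate: for bounded self-adjoint `A`, `B` and any bounded `T`,
`‖e^{-itA} T - T e^{-itB}‖ ≤ |t| ‖AT - TB‖`. -/
theorem duhamel_intertwining_estimate
    {H : Type*} [NormedAddCommGroup H] [InnerProductSpace ℂ H] [CompleteSpace H]
    (A B T : H →L[ℂ] H) (hA : IsSelfAdjoint A) (hB : IsSelfAdjoint B) (t : ℝ) :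
    ‖exp ((-(Complex.I * t)) • A) * T - T * exp ((-(Complex.I * t)) • B)‖ ≤
      |t| * ‖A * T - T * B‖ :=
  norm_exp_neg_I_smul_mul_sub_mul_exp_neg_I_smul_le hA hB T t
end

section
/- Let d ≥ 1, N ≥ 1, and let w_1, …, w_N : ℝ^d → ℂ be measurable functions such that for every m ∈ ℕ, sup_{x∈ℝ^d} (1+|x|)^m |w_j(x)| < ∞, and such that the family of translates {w_j(· − γ)}_{γ∈ℤ^d, 1≤j≤N} is orthonormal in L²(ℝ^d). Let A : ℝ^d → ℝ^d be a C¹ vector field and ε ≥ 0 a number such that sup_{w∈ℝ^d} |∂_j A_k(w) − ∂_k A_j(w)| ≤ ε for all j, k ∈ {1,…,d}. Define Λ(x,y) := exp(−i ∫_0^1 ⟨A(y + s(x−y)), x−y⟩ ds) and the magnetic translates W̃_{γ,j}(x) := Λ(x,γ) w_j(x−γ) for γ ∈ ℤ^d. Then for every m ∈ ℕ there exists a constant C_m < ∞, depending only on m, d, N and the decay constants sup_x (1+|x|)^r |w_j(x)| of the functions w_j, such that for all α, β ∈ ℤ^d and all j, k ∈ {1,…,N}: (1+|α−β|)^m ·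 |⟨W̃_{α,j}, W̃_{β,k}⟩_{L²(ℝ^d)} − δ_{αβ} δ_{jk}| ≤ C_m ε. -/
open MeasureTheory Complex

/-- A lattice point of `ℤ^d`, viewed as a vector in `ℝ^d`. -/
noncomputable def latticeEmbed {d : ℕ} (γ : Fin d → ℤ) : EuclideanSpace ℝ (Fin d) :=
  WithLp.toLp 2 (fun i => (γ i : ℝ))

/-- The magnetic phase `Λ(x,y) = exp(-i ∫_{[y,x]} A)` given by the line integral of the
vector potential `A` along the oriented segment from `y` to `x`. -/
noncomputable def magneticPhase {d : ℕ}
    (A : EuclideanSpace ℝ (Fin d) → EuclideanSpace ℝ (Fin d))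
    (x y : EuclideanSpace ℝ (Fin d)) : ℂ :=
  Complex.exp (-Complex.I *
    (∫ s in (0:ℝ)..1, (inner ℝ (A (y + s • (x - y))) (x - y) : ℝ) : ℝ))

/-!
Write `Λ(x, y) = exp (-i φ(y, x))` with `φ(y, x)` the integral of `A` along the segment
`[y, x]`, so that `conj Λ(x, a) · Λ(x, b) = exp (i (φ(a, x) - φ(b, x)))`. By Stokes' theorem
`φ(b, x) - φ(b, a) - φ(a, x)` is the flux of `B = dA` through the triangle `b, a, x`, hence at
most `d² ε |x - a| (|a - b| + |x - a|)`. Since the Gram matrix of the `w_j(· - γ)` is `δ`, and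
`δ` vanishes unless `a = b` (where `φ(b, a) = 0`), the Gram matrix minus `δ` is the integral of
`(exp (i (φ(a, x) - φ(b, x))) - exp (-i φ(b, a))) · conj w_j(x - a) · w_k(x - b)`. This integrand
is `ε` times a polynomial in `|x - a|`, `|x - b|` times the two rapidly decaying factors, and
`|a - b| ≤ |x - a| + |x - b|` lets those factors absorb the weight `(1 + |a - b|)^m`.
-/

open scoped RealInnerProductSpace

lemma norm_exp_I_mul_sub_exp_I_mul_le (p q : ℝ) :
    ‖exp (I * p) - exp (I * q)‖ ≤ |p - q| := by
  have hfactor : exp (I * p) - exp (I * q) = exp (I * q) * (exp (I * ↑(p - q)) - 1) := by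
    rw [mul_sub, ← exp_add]
    push_cast
    ring_nf
  rw [hfactor, norm_mul, norm_exp_I_mul_ofReal, one_mul]
  exact Real.norm_exp_I_mul_ofReal_sub_one_le

section SegmentIntegral

variable {E : Type*} [NormedAddCommGroup E] [InnerProductSpace ℝ E] {A : E → E}

noncomputable def segmentIntegral (A : E → E) (y x : E) : ℝ :=
  ∫ s in (0 : ℝ)..1, ⟪A (y + s • (x - y)), x - y⟫

@[simp]
lemma segmentIntegral_self (A : E → E) (y : E) : segmentIntegral A y y = 0 := by
  simp [segmentIntegral]

lemma continuous_segmentIntegral (hA : Continuous A) (y : E) :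
    Continuous (segmentIntegral A y) :=
  intervalIntegral.continuous_parametric_intervalIntegral_of_continuous' (by fun_prop) 0 1

lemma hasDerivAt_apply_add_smul (hA : Differentiable ℝ A) (y u : E) (t : ℝ) :
    HasDerivAt (fun t : ℝ => A (y + t • u)) (fderiv ℝ A (y + t • u) u) t := by
  have hline : HasDerivAt (fun t : ℝ => y + t • u) u t := by
    simpa using ((hasDerivAt_id t).smul_const u).const_add y
  exact (hA _).hasFDerivAt.comp_hasDerivAt t hline

lemma hasDerivAt_inner_apply_add_smul_add_smul (hA : Differentiable ℝ A) (b w v : E) (s t : ℝ) :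
    HasDerivAt (fun t : ℝ => ⟪A (b + s • (w + t • v)), w + t • v⟫)
      (⟪A (b + s • (w + t • v)), v⟫ + s * ⟪fderiv ℝ A (b + s • (w + t • v)) v, w + t • v⟫) t := by
  have hline : HasDerivAt (fun t : ℝ => w + t • v) v t := by
    simpa only [one_smul] using ((hasDerivAt_id' t).smul_const v).const_add w
  have hA_line := (hA (b + s • (w + t • v))).hasFDerivAt.comp_hasDerivAt t
    ((hline.const_smul s).const_add b)
  refine (hA_line.inner ℝ hline).congr_deriv ?_
  simp only [Function.comp_apply, Pi.smul_apply, map_smul, real_inner_smul_left]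

lemma integral_sub_eq_integral_integral_of_hasDerivAt {f g : ℝ → ℝ → ℝ}
    (hf : ∀ s t, HasDerivAt (f s) (g s t) t) (hg : Continuous (Function.uncurry g))
    (a b c d : ℝ) :
    ∫ s in a..b, (f s d - f s c) = ∫ t in c..d, ∫ s in a..b, g s t := by
  have hftc : ∀ s, f s d - f s c = ∫ t in c..d, g s t := fun s =>
    (intervalIntegral.integral_eq_sub_of_hasDerivAt (fun t _ => hf s t)
      ((hg.comp (Continuous.prodMk_right s)).intervalIntegrable c d)).symm
  simp_rw [hftc]
  refine intervalIntegral_intervalIntegral_swap ?_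
  exact (hg.continuousOn.integrableOn_compact (isCompact_uIcc.prod isCompact_uIcc)).mono_set
    (Set.prod_mono Set.uIoc_subset_uIcc Set.uIoc_subset_uIcc)

lemma integral_inner_add_mul_inner_fderiv (hA : ContDiff ℝ 1 A) (y u v : E) :
    ∫ s in (0 : ℝ)..1, (⟪A (y + s • u), v⟫ + s * ⟪fderiv ℝ A (y + s • u) u, v⟫) =
      ⟪A (y + u), v⟫ := by
  have hderiv : ∀ s : ℝ, HasDerivAt (fun s : ℝ => s * ⟪A (y + s • u), v⟫)
      (⟪A (y + s • u), v⟫ + s * ⟪fderiv ℝ A (y + s • u) u, v⟫) s := fun s => by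
    simpa using (hasDerivAt_id' s).fun_mul
      ((hasDerivAt_apply_add_smul (hA.differentiable one_ne_zero) y u s).inner ℝ
        (hasDerivAt_const s v))
  have hcont : Continuous fun s : ℝ =>
      ⟪A (y + s • u), v⟫ + s * ⟪fderiv ℝ A (y + s • u) u, v⟫ := by
    have := hA.continuous_fderiv one_ne_zero
    fun_prop
  rw [intervalIntegral.integral_eq_sub_of_hasDerivAt (fun s _ => hderiv s)
    (hcont.intervalIntegrable 0 1)]
  simp

/- Stokes' theorem for the triangle `b, a, x`, parametrised by
`(s, t) ↦ b + s • (a - b + t • (x - a))`: the edges `t = 0`, `t = 1` and `s = 1` are the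
segments `[b, a]`, `[b, x]` and `[a, x]`. -/
theorem segmentIntegral_triangle_eq_integral_curl (hA : ContDiff ℝ 1 A) (a b x : E) :
    segmentIntegral A b x - segmentIntegral A b a - segmentIntegral A a x =
      ∫ t in (0 : ℝ)..1, ∫ s in (0 : ℝ)..1,
        s * (⟪fderiv ℝ A (b + s • (a - b + t • (x - a))) (x - a), a - b + t • (x - a)⟫ -
          ⟪fderiv ℝ A (b + s • (a - b + t • (x - a))) (a - b + t • (x - a)), x - a⟫) := by
  set v := x - a
  set u : ℝ → E := fun t => a - b + t • v
  have hA' := hA.continuous_fderiv one_ne_zero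
  have hderiv : ∀ s t, HasDerivAt (fun t => ⟪A (b + s • u t), u t⟫)
      (⟪A (b + s • u t), v⟫ + s * ⟪fderiv ℝ A (b + s • u t) v, u t⟫) t :=
    hasDerivAt_inner_apply_add_smul_add_smul (hA.differentiable one_ne_zero) b (a - b) v
  have hinner : ∀ t, ∫ s in (0 : ℝ)..1,
      (⟪A (b + s • u t), v⟫ + s * ⟪fderiv ℝ A (b + s • u t) v, u t⟫) =
        ⟪A (a + t • v), v⟫ + ∫ s in (0 : ℝ)..1,
          s * (⟪fderiv ℝ A (b + s • u t) v, u t⟫ - ⟪fderiv ℝ A (b + s • u t) (u t), v⟫) := by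
    intro t
    have hbu : b + u t = a + t • v := by simp only [u]; abel
    rw [← hbu, ← integral_inner_add_mul_inner_fderiv hA b (u t) v,
      ← intervalIntegral.integral_add (by apply Continuous.intervalIntegrable; fun_prop)
        (by apply Continuous.intervalIntegrable; fun_prop)]
    congr 1 with s
    ring
  have hsegment : ∀ y z : E, IntervalIntegrable (fun s : ℝ => ⟪A (y + s • (z - y)), z - y⟫)
      volume 0 1 := fun y z => by
    apply Continuous.intervalIntegrable; fun_prop
  have hx : u 1 = x - b := by simp only [u, v, one_smul]; abel
  have ha : u 0 = a - b := by simp only [u, zero_smul, add_zero]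
  have hsplit : segmentIntegral A b x - segmentIntegral A b a =
      ∫ s in (0 : ℝ)..1, (⟪A (b + s • u 1), u 1⟫ - ⟪A (b + s • u 0), u 0⟫) := by
    rw [hx, ha, segmentIntegral, segmentIntegral,
      intervalIntegral.integral_sub (hsegment b x) (hsegment b a)]
  rw [hsplit, integral_sub_eq_integral_integral_of_hasDerivAt hderiv (by fun_prop),
    intervalIntegral.integral_congr (fun t _ => hinner t),
    intervalIntegral.integral_add (hsegment a x) (by apply Continuous.intervalIntegrable; fun_prop)]
  simp only [segmentIntegral, u, v]
  ring

lemma abs_le_one_of_mem_uIoc_zero_one {s : ℝ} (hs : s ∈ Set.uIoc (0 : ℝ) 1) : |s| ≤ 1 := by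
  rw [Set.uIoc_of_le zero_le_one] at hs
  exact abs_le.mpr ⟨by linarith [hs.1], hs.2⟩

theorem abs_segmentIntegral_triangle_le (hA : ContDiff ℝ 1 A) {κ : ℝ} (hκ : 0 ≤ κ)
    (hcurl : ∀ p u v : E, |⟪fderiv ℝ A p u, v⟫ - ⟪fderiv ℝ A p v, u⟫| ≤ κ * (‖u‖ * ‖v‖))
    (a b x : E) :
    |segmentIntegral A b x - segmentIntegral A b a - segmentIntegral A a x| ≤
      κ * (‖x - a‖ * (‖a - b‖ + ‖x - a‖)) := by
  rw [segmentIntegral_triangle_eq_integral_curl hA, ← Real.norm_eq_abs]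
  refine (intervalIntegral.norm_integral_le_of_norm_le_const
    (C := κ * (‖x - a‖ * (‖a - b‖ + ‖x - a‖))) fun t ht => ?_).trans (by simp)
  have hu : ‖a - b + t • (x - a)‖ ≤ ‖a - b‖ + ‖x - a‖ := by
    refine (norm_add_le _ _).trans (add_le_add_right ?_ _)
    rw [norm_smul, Real.norm_eq_abs]
    exact mul_le_of_le_one_left (norm_nonneg _) (abs_le_one_of_mem_uIoc_zero_one ht)
  refine (intervalIntegral.norm_integral_le_of_norm_le_const
    (C := κ * (‖x - a‖ * ‖a - b + t • (x - a)‖)) fun s hs => ?_).trans ?_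
  · rw [norm_mul, Real.norm_eq_abs, Real.norm_eq_abs]
    exact (mul_le_of_le_one_left (abs_nonneg _) (abs_le_one_of_mem_uIoc_zero_one hs)).trans
      (hcurl _ _ _)
  · simp only [sub_zero, abs_one, mul_one]
    gcongr

lemma norm_exp_I_mul_segmentIntegral_sub_le (hA : ContDiff ℝ 1 A) {κ : ℝ} (hκ : 0 ≤ κ)
    (hcurl : ∀ p u v : E, |⟪fderiv ℝ A p u, v⟫ - ⟪fderiv ℝ A p v, u⟫| ≤ κ * (‖u‖ * ‖v‖))
    (a b x : E) :
    ‖exp (I * ↑(segmentIntegral A a x - segmentIntegral A b x)) -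
        exp (I * ↑(-segmentIntegral A b a))‖ ≤ κ * (‖x - a‖ * (‖a - b‖ + ‖x - a‖)) := by
  refine (norm_exp_I_mul_sub_exp_I_mul_le _ _).trans
    (le_of_eq_of_le ?_ (abs_segmentIntegral_triangle_le hA hκ hcurl a b x))
  rw [← abs_neg]
  ring_nf

end SegmentIntegral

section Euclidean

variable {d : ℕ}

lemma inner_clm_apply_eq_sum_sum (L : EuclideanSpace ℝ (Fin d) →L[ℝ] EuclideanSpace ℝ (Fin d))
    (u v : EuclideanSpace ℝ (Fin d)) :
    ⟪L u, v⟫ = ∑ i, ∑ k, u i * v k * L (EuclideanSpace.single i 1) k := by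
  conv_lhs => rw [← (EuclideanSpace.basisFun (Fin d) ℝ).sum_repr u]
  simp only [map_sum, map_smul, sum_inner, PiLp.inner_apply, PiLp.smul_apply, smul_eq_mul,
    EuclideanSpace.basisFun_repr, EuclideanSpace.basisFun_apply, RCLike.inner_apply,
    Real.ringHom_apply]
  exact Finset.sum_congr rfl fun i _ => Finset.sum_congr rfl fun k _ => by ring

lemma fderiv_apply_eq_fderiv_coord {A : EuclideanSpace ℝ (Fin d) → EuclideanSpace ℝ (Fin d)}
    {p : EuclideanSpace ℝ (Fin d)}
    (hA : DifferentiableAt ℝ A p) (e : EuclideanSpace ℝ (Fin d)) (k : Fin d) :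
    fderiv ℝ A p e k = fderiv ℝ (fun y => A y k) p e := by
  have hcoord : HasFDerivAt (fun y => A y k) ((PiLp.proj 2 _ k).comp (fderiv ℝ A p)) p :=
    (PiLp.hasFDerivAt_apply (𝕜 := ℝ) 2 (A p) k).comp p hA.hasFDerivAt
  rw [hcoord.fderiv]
  rfl

lemma abs_inner_apply_sub_inner_apply_le
    (L : EuclideanSpace ℝ (Fin d) →L[ℝ] EuclideanSpace ℝ (Fin d)) {ε : ℝ}
    (hL : ∀ j k, |L (EuclideanSpace.single j 1) k - L (EuclideanSpace.single k 1) j| ≤ ε)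
    (u v : EuclideanSpace ℝ (Fin d)) :
    |⟪L u, v⟫ - ⟪L v, u⟫| ≤ d ^ 2 * ε * (‖u‖ * ‖v‖) := by
  have hsum : ⟪L u, v⟫ - ⟪L v, u⟫ = ∑ i, ∑ k, u i * v k *
      (L (EuclideanSpace.single i 1) k - L (EuclideanSpace.single k 1) i) := by
    rw [inner_clm_apply_eq_sum_sum, inner_clm_apply_eq_sum_sum L v,
      Finset.sum_comm (f := fun i k => v i * u k * _)]
    simp only [← Finset.sum_sub_distrib, mul_sub]
    exact Finset.sum_congr rfl fun i _ => Finset.sum_congr rfl fun k _ => by ring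
  calc |⟪L u, v⟫ - ⟪L v, u⟫|
      ≤ ∑ i : Fin d, ∑ k : Fin d, ‖u‖ * ‖v‖ * ε := by
        rw [hsum]
        refine (Finset.abs_sum_le_sum_abs _ _).trans (Finset.sum_le_sum fun i _ => ?_)
        refine (Finset.abs_sum_le_sum_abs _ _).trans (Finset.sum_le_sum fun k _ => ?_)
        rw [abs_mul, abs_mul]
        gcongr
        exacts [PiLp.norm_apply_le u i, PiLp.norm_apply_le v k, hL i k]
    _ = d ^ 2 * ε * (‖u‖ * ‖v‖) := by
        simp only [Finset.sum_const, Finset.card_univ, Fintype.card_fin, nsmul_eq_mul]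
        ring

end Euclidean

section Decay

lemma pow_mul_le_mul_inv_pow {t c D : ℝ} (ht : 0 < t) {r n : ℕ} (h : t ^ (r + n) * c ≤ D) :
    t ^ r * c ≤ D * (t ^ n)⁻¹ := by
  rw [← div_eq_mul_inv, le_div_iff₀ (by positivity)]
  calc t ^ r * c * t ^ n = t ^ (r + n) * c := by ring
    _ ≤ D := h

lemma one_add_pow_mul_mul_add_le {ρ z y : ℝ} (hz : 0 ≤ z) (hy : 0 ≤ y) (hρ : 0 ≤ ρ)
    (htri : ρ ≤ z + y) (m : ℕ) :
    (1 + ρ) ^ m * (z * (ρ + z)) ≤ 2 * ((1 + z) ^ (m + 2) * (1 + y) ^ (m + 1)) := by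
  have hpow : (1 + ρ) ^ m ≤ (1 + z) ^ m * (1 + y) ^ m := by
    rw [← mul_pow]
    exact pow_le_pow_left₀ (by positivity) (by nlinarith) m
  have harea : z * (ρ + z) ≤ 2 * ((1 + z) ^ 2 * (1 + y)) := by
    nlinarith [mul_nonneg hz hy, mul_nonneg (mul_nonneg hz hz) hy]
  calc (1 + ρ) ^ m * (z * (ρ + z))
      ≤ (1 + z) ^ m * (1 + y) ^ m * (2 * ((1 + z) ^ 2 * (1 + y))) := by gcongr
    _ = 2 * ((1 + z) ^ (m + 2) * (1 + y) ^ (m + 1)) := by ring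

variable {E : Type*} [NormedAddCommGroup E]

lemma one_add_norm_sub_pow_mul_norm_le {f g : E → ℂ}
    {D : ℕ → ℝ} (hf : ∀ r x, (1 + ‖x‖) ^ r * ‖f x‖ ≤ D r)
    (hg : ∀ r x, (1 + ‖x‖) ^ r * ‖g x‖ ≤ D r) {κ : ℝ} (hκ : 0 ≤ κ) {ζ : ℂ} {a b x : E}
    (hζ : ‖ζ‖ ≤ κ * (‖x - a‖ * (‖a - b‖ + ‖x - a‖))) (m n : ℕ) :
    (1 + ‖a - b‖) ^ m * ‖ζ * (starRingEnd ℂ (f (x - a)) * g (x - b))‖ ≤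
      2 * κ * D (m + 2 + n) * D (m + 1) * ((1 + ‖x - a‖) ^ n)⁻¹ := by
  have htri : ‖a - b‖ ≤ ‖x - a‖ + ‖x - b‖ := by
    simpa only [norm_sub_rev a x] using norm_sub_le_norm_sub_add_norm_sub a x b
  have hfa : (1 + ‖x - a‖) ^ (m + 2) * ‖f (x - a)‖ ≤ D (m + 2 + n) * ((1 + ‖x - a‖) ^ n)⁻¹ :=
    pow_mul_le_mul_inv_pow (by positivity) (hf _ _)
  have hgb := hg (m + 1) (x - b)
  calc (1 + ‖a - b‖) ^ m * ‖ζ * (starRingEnd ℂ (f (x - a)) * g (x - b))‖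
      ≤ κ * ((1 + ‖a - b‖) ^ m * (‖x - a‖ * (‖a - b‖ + ‖x - a‖))) *
          (‖f (x - a)‖ * ‖g (x - b)‖) := by
        rw [norm_mul, norm_mul, RCLike.norm_conj, ← mul_assoc, mul_left_comm κ]
        gcongr
    _ ≤ κ * (2 * ((1 + ‖x - a‖) ^ (m + 2) * (1 + ‖x - b‖) ^ (m + 1))) *
          (‖f (x - a)‖ * ‖g (x - b)‖) := by
        gcongr κ * ?_ * _
        exact one_add_pow_mul_mul_add_le (norm_nonneg _) (norm_nonneg _) (norm_nonneg _) htri m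
    _ = 2 * κ * (((1 + ‖x - a‖) ^ (m + 2) * ‖f (x - a)‖) *
          ((1 + ‖x - b‖) ^ (m + 1) * ‖g (x - b)‖)) := by ring
    _ ≤ 2 * κ * ((D (m + 2 + n) * ((1 + ‖x - a‖) ^ n)⁻¹) * D (m + 1)) := by
        gcongr
        exact (by positivity : (0 : ℝ) ≤ _).trans hfa
    _ = 2 * κ * D (m + 2 + n) * D (m + 1) * ((1 + ‖x - a‖) ^ n)⁻¹ := by ring

variable [NormedSpace ℝ E] [FiniteDimensional ℝ E] [MeasurableSpace E] [BorelSpace E]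
  {μ : Measure E} [μ.IsAddHaarMeasure]

lemma integrable_inv_one_add_norm_pow {n : ℕ} (hn : Module.finrank ℝ E < n) :
    Integrable (fun x : E => ((1 + ‖x‖) ^ n)⁻¹) μ := by
  refine (integrable_one_add_norm (μ := μ) (r := n) (by exact_mod_cast hn)).congr
    (Filter.Eventually.of_forall fun x => ?_)
  simp only [Real.rpow_neg (by positivity : (0 : ℝ) ≤ 1 + ‖x‖), Real.rpow_natCast]

lemma integrable_conj_comp_sub_mul_comp_sub {f g : E → ℂ} (hf : Measurable f)
    (hg : Measurable g) {n : ℕ} (hn : Module.finrank ℝ E < n) {Cf Cg : ℝ}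
    (hfC : ∀ x, (1 + ‖x‖) ^ n * ‖f x‖ ≤ Cf) (hgC : ∀ x, ‖g x‖ ≤ Cg) (a b : E) :
    Integrable (fun x => starRingEnd ℂ (f (x - a)) * g (x - b)) μ := by
  refine (((integrable_inv_one_add_norm_pow hn).comp_sub_right a).const_mul (Cf * Cg)).mono'
    ((continuous_conj.measurable.comp (hf.comp (measurable_sub_const a))).mul
      (hg.comp (measurable_sub_const b))).aestronglyMeasurable
    (Filter.Eventually.of_forall fun x => ?_)
  have hfa : ‖f (x - a)‖ ≤ Cf * ((1 + ‖x - a‖) ^ n)⁻¹ := by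
    simpa using pow_mul_le_mul_inv_pow (r := 0) (by positivity) (by simpa using hfC (x - a))
  rw [norm_mul, RCLike.norm_conj, mul_right_comm]
  exact mul_le_mul hfa (hgC _) (norm_nonneg _) ((norm_nonneg _).trans hfa)

end Decay

lemma mul_norm_integral_le_integral {X : Type*} [MeasurableSpace X] {μ : Measure X}
    {F : X → ℂ} {g : X → ℝ} (hg : Integrable g μ) {c : ℝ} (hc : 0 ≤ c)
    (h : ∀ x, c * ‖F x‖ ≤ g x) :
    c * ‖∫ x, F x ∂μ‖ ≤ ∫ x, g x ∂μ := by
  have hnorm : ∀ z : ℂ, c * ‖z‖ = ‖(c : ℂ) * z‖ := fun z => by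
    rw [norm_mul, norm_real, Real.norm_of_nonneg hc]
  rw [hnorm, ← integral_const_mul]
  exact norm_integral_le_of_norm_le hg
    (Filter.Eventually.of_forall fun x => (hnorm _).symm.le.trans (h x))

lemma integral_exp_I_mul_mul_sub {X : Type*} [MeasurableSpace X] {μ : Measure X} {Φ : X → ℝ}
    (hΦ : Measurable Φ) {G : X → ℂ} (hG : Integrable G μ) (c : ℝ) :
    ∫ x, exp (I * Φ x) * G x ∂μ - exp (I * c) * ∫ x, G x ∂μ =
      ∫ x, (exp (I * Φ x) - exp (I * c)) * G x ∂μ := by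
  have hbounded : Integrable (fun x => exp (I * Φ x) * G x) μ := by
    refine hG.bdd_mul (c := 1) (by fun_prop) (Filter.Eventually.of_forall fun x => ?_)
    rw [norm_exp_I_mul_ofReal]
  rw [← integral_const_mul, ← integral_sub hbounded (hG.const_mul _)]
  simp only [sub_mul]

lemma conj_exp_neg_I_mul_mul_exp_neg_I_mul {p q : ℝ} (f g : ℂ) :
    starRingEnd ℂ (exp (-I * p) * f) * (exp (-I * q) * g) =
      exp (I * ↑(p - q)) * (starRingEnd ℂ f * g) := by
  have hsplit : exp (I * ↑(p - q)) = exp (I * p) * exp (-I * q) := by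
    rw [← exp_add]
    push_cast
    ring_nf
  rw [hsplit, map_mul, ← exp_conj, map_mul, map_neg, conj_I, conj_ofReal, neg_neg]
  ring

section MagneticPhase

variable {d : ℕ} {A : EuclideanSpace ℝ (Fin d) → EuclideanSpace ℝ (Fin d)}

lemma magneticPhase_eq_exp_segmentIntegral (A : EuclideanSpace ℝ (Fin d) → EuclideanSpace ℝ (Fin d))
    (x y : EuclideanSpace ℝ (Fin d)) :
    magneticPhase A x y = exp (-I * segmentIntegral A y x) := rfl

lemma integral_conj_magneticPhase_mul_sub (hA : Continuous A) {f g : EuclideanSpace ℝ (Fin d) → ℂ}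
    {a b : EuclideanSpace ℝ (Fin d)}
    (hG : Integrable fun x => starRingEnd ℂ (f (x - a)) * g (x - b)) :
    (∫ x, starRingEnd ℂ (magneticPhase A x a * f (x - a)) * (magneticPhase A x b * g (x - b))) -
        exp (I * ↑(-segmentIntegral A b a)) * ∫ x, starRingEnd ℂ (f (x - a)) * g (x - b) =
      ∫ x, (exp (I * ↑(segmentIntegral A a x - segmentIntegral A b x)) -
          exp (I * ↑(-segmentIntegral A b a))) * (starRingEnd ℂ (f (x - a)) * g (x - b)) := by
  simp_rw [magneticPhase_eq_exp_segmentIntegral, conj_exp_neg_I_mul_mul_exp_neg_I_mul]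
  exact integral_exp_I_mul_mul_sub
    ((continuous_segmentIntegral hA a).sub (continuous_segmentIntegral hA b)).measurable hG _

lemma abs_inner_fderiv_apply_sub_le (hA : Differentiable ℝ A) {ε : ℝ}
    (hcurl : ∀ (j k : Fin d) (v : EuclideanSpace ℝ (Fin d)),
      |fderiv ℝ (fun y => A y k) v (EuclideanSpace.single j 1) -
        fderiv ℝ (fun y => A y j) v (EuclideanSpace.single k 1)| ≤ ε)
    (p u v : EuclideanSpace ℝ (Fin d)) :
    |⟪fderiv ℝ A p u, v⟫ - ⟪fderiv ℝ A p v, u⟫| ≤ d ^ 2 * ε * (‖u‖ * ‖v‖) :=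
  abs_inner_apply_sub_inner_apply_le _ (fun j k => by
    simpa only [fderiv_apply_eq_fderiv_coord (hA p)] using hcurl j k p) u v

end MagneticPhase

theorem magnetic_wannier_gram_estimate_general (d N : ℕ)
    (D : ℕ → ℝ) (m : ℕ) :
    ∃ C : ℝ, ∀ (w : Fin N → EuclideanSpace ℝ (Fin d) → ℂ),
      (∀ j, Measurable (w j)) →
      (∀ (r : ℕ) (j : Fin N) (x : EuclideanSpace ℝ (Fin d)),
        (1 + ‖x‖) ^ r * ‖w j x‖ ≤ D r) →
      (∀ (α β : Fin d → ℤ) (j k : Fin N),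
        ∫ x : EuclideanSpace ℝ (Fin d),
            (starRingEnd ℂ) (w j (x - latticeEmbed α)) * w k (x - latticeEmbed β) =
          if α = β ∧ j = k then 1 else 0) →
      ∀ (A : EuclideanSpace ℝ (Fin d) → EuclideanSpace ℝ (Fin d)),
        ContDiff ℝ 1 A →
      ∀ ε : ℝ, 0 ≤ ε →
        (∀ (j k : Fin d) (v : EuclideanSpace ℝ (Fin d)),
          |fderiv ℝ (fun y => A y k) v (EuclideanSpace.single j 1) -
            fderiv ℝ (fun y => A y j) v (EuclideanSpace.single k 1)| ≤ ε) →
      ∀ (α β : Fin d → ℤ) (j k : Fin N),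
        (1 + ‖latticeEmbed α - latticeEmbed β‖) ^ m *
          ‖(∫ x : EuclideanSpace ℝ (Fin d),
              (starRingEnd ℂ) (magneticPhase A x (latticeEmbed α) *
                  w j (x - latticeEmbed α)) *
                (magneticPhase A x (latticeEmbed β) * w k (x - latticeEmbed β))) -
            (if α = β ∧ j = k then 1 else 0)‖ ≤ C * ε := by
  refine ⟨2 * (d : ℝ) ^ 2 * D (m + 2 + (d + 1)) * D (m + 1) *
    ∫ x : EuclideanSpace ℝ (Fin d), ((1 + ‖x‖) ^ (d + 1))⁻¹, ?_⟩
  intro w hw hdecay hortho A hA ε hε hcurl α β j k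
  set a := latticeEmbed α
  set b := latticeEmbed β
  have hweight : Integrable fun x : EuclideanSpace ℝ (Fin d) => ((1 + ‖x - a‖) ^ (d + 1))⁻¹ :=
    (integrable_inv_one_add_norm_pow (by simp)).comp_sub_right a
  have hG := integrable_conj_comp_sub_mul_comp_sub (μ := volume) (hw j) (hw k)
    (n := d + 1) (by simp) (hdecay _ j) (by simpa using hdecay 0 k) a b
  have hδ : exp (I * ↑(-segmentIntegral A b a)) * (if α = β ∧ j = k then 1 else 0) =
      if α = β ∧ j = k then 1 else 0 := by
    split_ifs with h
    · simp [a, b, h.1]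
    · rw [mul_zero]
  rw [← hδ, ← hortho α β j k, integral_conj_magneticPhase_mul_sub hA.continuous hG]
  refine (mul_norm_integral_le_integral (hweight.const_mul _) (by positivity) fun x =>
    one_add_norm_sub_pow_mul_norm_le (hdecay · j) (hdecay · k) (by positivity)
      (norm_exp_I_mul_segmentIntegral_sub_le hA (by positivity)
        (abs_inner_fderiv_apply_sub_le (hA.differentiable one_ne_zero) hcurl) a b x)
      m (d + 1)).trans (le_of_eq ?_)
  rw [integral_const_mul, integral_sub_right_eq_self (fun x => ((1 + ‖x‖) ^ (d + 1))⁻¹)]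
  ring

/-- The Gram matrix of the magnetic translates of a rapidly decaying orthonormal
Wannier system is the identity up to an `ε`-small, rapidly off-diagonal decaying
perturbation, where `ε` bounds the magnetic field `B = dA`. -/
theorem magnetic_wannier_gram_estimate (d N : ℕ) (hd : 1 ≤ d) (hN : 1 ≤ N)
    (D : ℕ → ℝ) (m : ℕ) :
    ∃ C : ℝ, ∀ (w : Fin N → EuclideanSpace ℝ (Fin d) → ℂ),
      (∀ j, Measurable (w j)) →
      (∀ (r : ℕ) (j : Fin N) (x : EuclideanSpace ℝ (Fin d)),
        (1 + ‖x‖) ^ r * ‖w j x‖ ≤ D r) →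
      (∀ (α β : Fin d → ℤ) (j k : Fin N),
        ∫ x : EuclideanSpace ℝ (Fin d),
            (starRingEnd ℂ) (w j (x - latticeEmbed α)) * w k (x - latticeEmbed β) =
          if α = β ∧ j = k then 1 else 0) →
      ∀ (A : EuclideanSpace ℝ (Fin d) → EuclideanSpace ℝ (Fin d)),
        ContDiff ℝ 1 A →
      ∀ ε : ℝ, 0 ≤ ε →
        (∀ (j k : Fin d) (v : EuclideanSpace ℝ (Fin d)),
          |fderiv ℝ (fun y => A y k) v (EuclideanSpace.single j 1) -
            fderiv ℝ (fun y => A y j) v (EuclideanSpace.single k 1)| ≤ ε) →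
      ∀ (α β : Fin d → ℤ) (j k : Fin N),
        (1 + ‖latticeEmbed α - latticeEmbed β‖) ^ m *
          ‖(∫ x : EuclideanSpace ℝ (Fin d),
              (starRingEnd ℂ) (magneticPhase A x (latticeEmbed α) *
                  w j (x - latticeEmbed α)) *
                (magneticPhase A x (latticeEmbed β) * w k (x - latticeEmbed β))) -
            (if α = β ∧ j = k then 1 else 0)‖ ≤ C * ε :=
  magnetic_wannier_gram_estimate_general d N D m
end

section
/- Let d ≥ 1, N ≥ 1, and let w_1, …, w_N : ℝ^d → ℂ be measurable functions such that for every m ∈ ℕ, sup_{x∈ℝ^d} (1+|x|)^m |w_j(x)| < ∞. Let B : ℝ^d → M_d(ℝ) be continuous, antisymmetric-valued, with sup_{j,k,w} |B_{jk}(w)| ≤ ε. For γ ∈ ℤ^d and x, y ∈ ℝ^d set ω_γ(x,y) := exp(i Φ_B(γ,x,y)), where Φ_B(γ,x,y) is the flux of B through the triangle with vertices γ, x, y. Define K(x,y) := Σ_{γ∈ℤ^d} Σ_{j=1}^N w_j(x−γ) conj(w_j(y−γ)) and K_ε(x,y) := Σ_{γ∈ℤ^d} Σ_{j=1}^N ω_γ(x,y)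 w_j(x−γ) conj(w_j(y−γ)) (both series converge absolutely). Then for every m ∈ ℕ there exists a constant C_m < ∞, depending only on m, d, N and the decay constants of the w_j, such that sup_{x,y∈ℝ^d} (1+|x−y|)^m |K_ε(x,y) − K(x,y)| ≤ C_m ε. -/
/-!
Since `‖exp (i Φ) - 1‖ ≤ |Φ|` and the flux through the triangle `(γ, x, y)` is at most
`ε d² |x - γ| |y - γ|`, the `γ`-th terms of `K_ε` and `K` differ by at most that factor times the
`γ`-th term of `K`. The weight `(1 + |x - y|)^m` is absorbed by `(1 + |x - γ|)^m (1 + |y - γ|)^m`,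
so the decay of the `w_j` leaves a factor `(1 + |x - γ|)^(-2d)`. Rounding `x` to the nearest lattice
point `c` bounds this by `4^d ∏ᵢ (1 + |γᵢ - cᵢ|)^(-2)`, whose sum over `ℤ^d` does not depend on `x`.
-/

open MeasureTheory Complex

/-- The standard 2-simplex `{(s,t) : 0 ≤ s, 0 ≤ t, s + t ≤ 1}` in `ℝ × ℝ`. -/
def simplex2 : Set (ℝ × ℝ) := {p | 0 ≤ p.1 ∧ 0 ≤ p.2 ∧ p.1 + p.2 ≤ 1}

/-- The flux of a matrix field `B` through the oriented triangle with vertices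
`a`, `b`, `c`, via the affine parametrization over the standard simplex. -/
noncomputable def triangleFlux {d : ℕ}
    (B : EuclideanSpace ℝ (Fin d) → Matrix (Fin d) (Fin d) ℝ)
    (a b c : EuclideanSpace ℝ (Fin d)) : ℝ :=
  ∫ p in simplex2,
    ∑ j : Fin d, ∑ k : Fin d,
      B (a + p.1 • (b - a) + p.2 • (c - a)) j k * (b - a) j * (c - a) k

open Finset ComplexConjugate

namespace MagneticKernel

variable {d N : ℕ}

lemma summable_inv_one_add_abs_sq : Summable fun k : ℤ => ((1 + |(k : ℝ)|) ^ 2)⁻¹ := by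
  have hnat : Summable fun n : ℕ => ((1 + (n : ℝ)) ^ 2)⁻¹ := by
    refine ((summable_nat_add_iff 1).mpr (Real.summable_nat_pow_inv.mpr one_lt_two)).congr
      fun n => ?_
    push_cast
    ring
  exact .of_nat_of_neg (hnat.congr fun n => by simp) (hnat.congr fun n => by simp)

lemma summable_prod_apply {α : Type*} {f : α → ℝ} (hf₀ : 0 ≤ f) (hf : Summable f) :
    ∀ n : ℕ, Summable fun γ : Fin n → α => ∏ i, f (γ i)
  | 0 => .of_finite
  | n + 1 => by
    have hprod := hf.mul_of_nonneg (summable_prod_apply hf₀ hf n) hf₀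
      fun γ => prod_nonneg fun i _ => hf₀ (γ i)
    refine (Fin.consEquiv fun _ => α).summable_iff.mp (hprod.congr fun p => ?_)
    simp [Fin.consEquiv, Fin.prod_univ_succ]

noncomputable def latticeWeight (γ : Fin d → ℤ) : ℝ := ∏ i, ((1 + |(γ i : ℝ)|) ^ 2)⁻¹

lemma hasSum_latticeWeight_sub (c : Fin d → ℤ) :
    HasSum (fun γ => latticeWeight (γ - c)) (∑' γ : Fin d → ℤ, latticeWeight γ) := by
  have hsum : Summable (latticeWeight (d := d)) :=
    summable_prod_apply (fun _ => by positivity) summable_inv_one_add_abs_sq d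
  exact ((Equiv.subRight c).hasSum_iff (f := latticeWeight)).mpr hsum.hasSum

lemma one_add_abs_sub_round_le (t : ℝ) (k : ℤ) :
    1 + |((k - round t : ℤ) : ℝ)| ≤ 2 * (1 + |t - k|) := by
  have hround := abs_sub_round t
  have htri := abs_sub_le (k : ℝ) t (round t)
  rw [abs_sub_comm (k : ℝ) t] at htri
  push_cast
  linarith [abs_nonneg (t - k)]

lemma inv_one_add_norm_sub_pow_le (x : EuclideanSpace ℝ (Fin d)) (γ : Fin d → ℤ) :
    ((1 + ‖x - latticeEmbed γ‖) ^ (2 * d))⁻¹ ≤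
      4 ^ d * latticeWeight (γ - fun i => round (x i)) := by
  set X := ‖x - latticeEmbed γ‖
  have hcoord : ∀ i, 1 + |((γ i - round (x i) : ℤ) : ℝ)| ≤ 2 * (1 + X) := fun i => by
    have hi : |x i - γ i| ≤ X := by
      have hle := PiLp.norm_apply_le (x - latticeEmbed γ) i
      rw [Real.norm_eq_abs] at hle
      convert hle using 2
      simp [latticeEmbed]
    linarith [one_add_abs_sub_round_le (x i) (γ i)]
  calc ((1 + X) ^ (2 * d))⁻¹ = 4 ^ d * ∏ _i : Fin d, ((2 * (1 + X)) ^ 2)⁻¹ := by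
        rw [prod_const, card_univ, Fintype.card_fin, ← mul_pow, pow_mul, ← inv_pow ((1 + X) ^ 2)]
        congr 1
        field_simp
        ring
    _ ≤ 4 ^ d * latticeWeight (γ - fun i => round (x i)) := by
        unfold latticeWeight
        gcongr with i
        simpa using hcoord i

lemma one_add_norm_sub_pow_le (x y z : EuclideanSpace ℝ (Fin d)) (m : ℕ) :
    (1 + ‖x - y‖) ^ m ≤ (1 + ‖x - z‖) ^ m * (1 + ‖y - z‖) ^ m := by
  rw [← mul_pow]
  have htri := norm_sub_le_norm_sub_add_norm_sub x z y
  rw [norm_sub_rev z y] at htri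
  gcongr
  nlinarith [norm_nonneg (x - z), norm_nonneg (y - z)]

lemma abs_sum_sum_mul_mul_le {M : Matrix (Fin d) (Fin d) ℝ} {ε : ℝ} (hM : ∀ j k, |M j k| ≤ ε)
    (u v : EuclideanSpace ℝ (Fin d)) :
    |∑ j, ∑ k, M j k * u j * v k| ≤ ε * d ^ 2 * ‖u‖ * ‖v‖ := by
  calc |∑ j, ∑ k, M j k * u j * v k| ≤ ∑ j, ∑ k, |M j k * u j * v k| :=
        (abs_sum_le_sum_abs _ _).trans (sum_le_sum fun j _ => abs_sum_le_sum_abs _ _)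
    _ ≤ ∑ _j : Fin d, ∑ _k : Fin d, ε * ‖u‖ * ‖v‖ := by
        gcongr with j _ k _
        have hε : 0 ≤ ε := (abs_nonneg _).trans (hM j k)
        rw [abs_mul, abs_mul]
        gcongr
        exacts [hM j k, PiLp.norm_apply_le u j, PiLp.norm_apply_le v k]
    _ = ε * d ^ 2 * ‖u‖ * ‖v‖ := by
        simp only [sum_const, card_univ, Fintype.card_fin, nsmul_eq_mul]
        ring

lemma volume_simplex2_le_one : volume simplex2 ≤ 1 := by
  have hsub : simplex2 ⊆ Set.Icc ((0 : ℝ), (0 : ℝ)) (1, 1) := by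
    rintro ⟨s, t⟩ ⟨hs, ht, hst⟩
    exact ⟨⟨hs, ht⟩, by dsimp at *; linarith, by dsimp at *; linarith⟩
  calc volume simplex2 ≤ volume (Set.Icc ((0 : ℝ), (0 : ℝ)) (1, 1)) := measure_mono hsub
    _ = 1 := by
      rw [Set.Icc_prod_eq, Measure.volume_eq_prod, Measure.prod_prod]
      simp

lemma abs_triangleFlux_le {B : EuclideanSpace ℝ (Fin d) → Matrix (Fin d) (Fin d) ℝ} {ε : ℝ}
    (hB : ∀ j k v, |B v j k| ≤ ε) (a b c : EuclideanSpace ℝ (Fin d)) :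
    |triangleFlux B a b c| ≤ ε * d ^ 2 * ‖b - a‖ * ‖c - a‖ := by
  have hpoint : ∀ p ∈ simplex2, ‖∑ j, ∑ k,
      B (a + p.1 • (b - a) + p.2 • (c - a)) j k * (b - a) j * (c - a) k‖ ≤
        ε * d ^ 2 * ‖b - a‖ * ‖c - a‖ :=
    fun p _ => abs_sum_sum_mul_mul_le (fun j k => hB j k _) _ _
  have hconst : 0 ≤ ε * d ^ 2 * ‖b - a‖ * ‖c - a‖ :=
    (norm_nonneg _).trans (hpoint (0, 0) ⟨le_rfl, le_rfl, by norm_num⟩)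
  have hvol : volume.real simplex2 ≤ 1 :=
    ENNReal.toReal_le_of_le_ofReal zero_le_one (by simpa using volume_simplex2_le_one)
  calc |triangleFlux B a b c| ≤ ε * d ^ 2 * ‖b - a‖ * ‖c - a‖ * volume.real simplex2 :=
        norm_setIntegral_le_of_norm_le_const
          (volume_simplex2_le_one.trans_lt ENNReal.one_lt_top) hpoint
    _ ≤ ε * d ^ 2 * ‖b - a‖ * ‖c - a‖ := mul_le_of_le_one_right hconst hvol

lemma mul_norm_tsum_sub_tsum_le {ι E : Type*} [NormedAddCommGroup E] {a b : ι → E}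
    {g : ι → ℝ} {t S : ℝ} (ht : 0 < t) (ha : Summable a) (hb : Summable b) (hg : HasSum g S)
    (h : ∀ i, t * ‖a i - b i‖ ≤ g i) : t * ‖∑' i, a i - ∑' i, b i‖ ≤ S := by
  rw [← ha.tsum_sub hb, mul_comm, ← le_div_iff₀ ht]
  exact tsum_of_norm_bounded (hg.div_const t) fun i => by
    rw [le_div_iff₀ ht, mul_comm]
    exact h i

section KernelTerms

variable (B : EuclideanSpace ℝ (Fin d) → Matrix (Fin d) (Fin d) ℝ)
  (w : Fin N → EuclideanSpace ℝ (Fin d) → ℂ) (x y : EuclideanSpace ℝ (Fin d))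

noncomputable def bandKernelTerm (γ : Fin d → ℤ) : ℂ :=
  ∑ j, w j (x - latticeEmbed γ) * conj (w j (y - latticeEmbed γ))

noncomputable def magneticKernelTerm (γ : Fin d → ℤ) : ℂ :=
  ∑ j, Complex.exp (Complex.I * (triangleFlux B (latticeEmbed γ) x y : ℝ)) *
    w j (x - latticeEmbed γ) * conj (w j (y - latticeEmbed γ))

lemma magneticKernelTerm_eq (γ : Fin d → ℤ) :
    magneticKernelTerm B w x y γ =
      Complex.exp (Complex.I * (triangleFlux B (latticeEmbed γ) x y : ℝ)) *
        bandKernelTerm w x y γ := by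
  simp only [magneticKernelTerm, bandKernelTerm, mul_sum, mul_assoc]

lemma norm_magneticKernelTerm (γ : Fin d → ℤ) :
    ‖magneticKernelTerm B w x y γ‖ = ‖bandKernelTerm w x y γ‖ := by
  rw [magneticKernelTerm_eq, norm_mul, Complex.norm_exp_I_mul_ofReal, one_mul]

lemma norm_magneticKernelTerm_sub_le {ε : ℝ} (hB : ∀ j k v, |B v j k| ≤ ε) (γ : Fin d → ℤ) :
    ‖magneticKernelTerm B w x y γ - bandKernelTerm w x y γ‖ ≤
      ε * d ^ 2 * ‖x - latticeEmbed γ‖ * ‖y - latticeEmbed γ‖ * ‖bandKernelTerm w x y γ‖ := by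
  rw [magneticKernelTerm_eq, ← sub_one_mul, norm_mul]
  gcongr
  exact Real.norm_exp_I_mul_ofReal_sub_one_le.trans (abs_triangleFlux_le hB _ _ _)

variable {w}

lemma pow_mul_pow_mul_norm_bandKernelTerm_le {r : ℕ} {C : ℝ}
    (hw : ∀ j v, (1 + ‖v‖) ^ r * ‖w j v‖ ≤ C) (γ : Fin d → ℤ) :
    (1 + ‖x - latticeEmbed γ‖) ^ r * (1 + ‖y - latticeEmbed γ‖) ^ r *
      ‖bandKernelTerm w x y γ‖ ≤ N * C ^ 2 := by
  set X := 1 + ‖x - latticeEmbed γ‖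
  set Y := 1 + ‖y - latticeEmbed γ‖
  calc X ^ r * Y ^ r * ‖bandKernelTerm w x y γ‖
      ≤ X ^ r * Y ^ r * ∑ j, ‖w j (x - latticeEmbed γ)‖ * ‖w j (y - latticeEmbed γ)‖ := by
        gcongr
        refine (norm_sum_le _ _).trans_eq (sum_congr rfl fun j _ => ?_)
        rw [norm_mul, RCLike.norm_conj]
    _ = ∑ j, (X ^ r * ‖w j (x - latticeEmbed γ)‖) * (Y ^ r * ‖w j (y - latticeEmbed γ)‖) := by
        rw [mul_sum]
        exact sum_congr rfl fun j _ => by ring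
    _ ≤ ∑ _j : Fin N, C * C := sum_le_sum fun j _ =>
        mul_le_mul (hw _ _) (hw _ _) (by positivity) ((mul_nonneg (by positivity) (norm_nonneg _)).trans (hw j 0))
    _ = N * C ^ 2 := by simp only [sum_const, card_univ, Fintype.card_fin, nsmul_eq_mul]; ring

lemma pow_mul_pow_mul_norm_bandKernelTerm_le_latticeWeight {m : ℕ} {C : ℝ}
    (hw : ∀ j v, (1 + ‖v‖) ^ (m + 2 * d) * ‖w j v‖ ≤ C) (γ : Fin d → ℤ) :
    (1 + ‖x - latticeEmbed γ‖) ^ m * (1 + ‖y - latticeEmbed γ‖) ^ m *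
      ‖bandKernelTerm w x y γ‖ ≤ 4 ^ d * N * C ^ 2 * latticeWeight (γ - fun i => round (x i)) := by
  set X := 1 + ‖x - latticeEmbed γ‖
  set Y := 1 + ‖y - latticeEmbed γ‖
  have hX : 1 ≤ X := le_add_of_nonneg_right (norm_nonneg _)
  have hY : 1 ≤ Y := le_add_of_nonneg_right (norm_nonneg _)
  have hdecay := pow_mul_pow_mul_norm_bandKernelTerm_le x y hw γ
  calc X ^ m * Y ^ m * ‖bandKernelTerm w x y γ‖
      = (X ^ (2 * d))⁻¹ * (X ^ (m + 2 * d) * Y ^ m * ‖bandKernelTerm w x y γ‖) := by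
        rw [pow_add]
        field_simp
    _ ≤ (X ^ (2 * d))⁻¹ * (N * C ^ 2) := by
        refine mul_le_mul_of_nonneg_left (le_trans ?_ hdecay) (by positivity)
        gcongr
        omega
    _ ≤ 4 ^ d * latticeWeight (γ - fun i => round (x i)) * (N * C ^ 2) :=
        mul_le_mul_of_nonneg_right (inv_one_add_norm_sub_pow_le x γ)
          ((by positivity : (0 : ℝ) ≤ _).trans hdecay)
    _ = 4 ^ d * N * C ^ 2 * latticeWeight (γ - fun i => round (x i)) := by ring

variable {B}

lemma magneticKernel_sub_bandKernel_le {m : ℕ} {C ε : ℝ}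
    (hw : ∀ j v, (1 + ‖v‖) ^ (m + 1 + 2 * d) * ‖w j v‖ ≤ C) (hε : 0 ≤ ε)
    (hB : ∀ j k v, |B v j k| ≤ ε) :
    Summable (fun γ => ‖bandKernelTerm w x y γ‖) ∧
      Summable (fun γ => ‖magneticKernelTerm B w x y γ‖) ∧
      (1 + ‖x - y‖) ^ m *
          ‖∑' γ, magneticKernelTerm B w x y γ - ∑' γ, bandKernelTerm w x y γ‖ ≤
        d ^ 2 * (4 ^ d * N * C ^ 2) * (∑' γ : Fin d → ℤ, latticeWeight γ) * ε := by
  set K := 4 ^ d * N * C ^ 2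
  have hW := hasSum_latticeWeight_sub fun i => round (x i)
  have hdecay := pow_mul_pow_mul_norm_bandKernelTerm_le_latticeWeight x y (m := m + 1) hw
  have hband (γ : Fin d → ℤ) :
      ‖bandKernelTerm w x y γ‖ ≤ K * latticeWeight (γ - fun i => round (x i)) := by
    refine le_trans (le_mul_of_one_le_left (norm_nonneg _) ?_) (hdecay γ)
    exact one_le_mul_of_one_le_of_one_le (one_le_pow₀ (by simp)) (one_le_pow₀ (by simp))
  have hsb : Summable fun γ => ‖bandKernelTerm w x y γ‖ :=
    (hW.summable.mul_left K).of_nonneg_of_le (fun _ => norm_nonneg _) hband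
  have hsm : Summable fun γ => ‖magneticKernelTerm B w x y γ‖ :=
    hsb.congr fun γ => (norm_magneticKernelTerm B w x y γ).symm
  refine ⟨hsb, hsm, (mul_norm_tsum_sub_tsum_le (by positivity) hsm.of_norm hsb.of_norm
    (hW.mul_left (ε * d ^ 2 * K)) fun γ => ?_).trans_eq (by ring)⟩
  set X := ‖x - latticeEmbed γ‖
  set Y := ‖y - latticeEmbed γ‖
  calc (1 + ‖x - y‖) ^ m * ‖magneticKernelTerm B w x y γ - bandKernelTerm w x y γ‖
      ≤ (1 + X) ^ m * (1 + Y) ^ m * (ε * d ^ 2 * X * Y * ‖bandKernelTerm w x y γ‖) :=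
        mul_le_mul (one_add_norm_sub_pow_le x y _ m) (norm_magneticKernelTerm_sub_le B w x y hB γ)
          (norm_nonneg _) (by positivity)
    _ ≤ (1 + X) ^ m * (1 + Y) ^ m *
          (ε * d ^ 2 * (1 + X) * (1 + Y) * ‖bandKernelTerm w x y γ‖) := by
        gcongr <;> simp
    _ = ε * d ^ 2 * ((1 + X) ^ (m + 1) * (1 + Y) ^ (m + 1) * ‖bandKernelTerm w x y γ‖) := by
        ring
    _ ≤ ε * d ^ 2 * (K * latticeWeight (γ - fun i => round (x i))) :=
        mul_le_mul_of_nonneg_left (hdecay γ) (by positivity)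
    _ = ε * d ^ 2 * K * latticeWeight (γ - fun i => round (x i)) := by ring

end KernelTerms

end MagneticKernel

open MagneticKernel

theorem magnetic_kernel_comparison_general (d N : ℕ)
    (D : ℕ → ℝ) (m : ℕ) :
    ∃ C : ℝ, ∀ (w : Fin N → EuclideanSpace ℝ (Fin d) → ℂ),
      (∀ j, Measurable (w j)) →
      (∀ (r : ℕ) (j : Fin N) (x : EuclideanSpace ℝ (Fin d)),
        (1 + ‖x‖) ^ r * ‖w j x‖ ≤ D r) →
      ∀ ε : ℝ, 0 ≤ ε →
      ∀ (B : EuclideanSpace ℝ (Fin d) → Matrix (Fin d) (Fin d) ℝ),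
        Continuous B →
        (∀ v j k, B v j k = - B v k j) →
        (∀ j k v, |B v j k| ≤ ε) →
      (∀ x y : EuclideanSpace ℝ (Fin d),
        Summable (fun γ : Fin d → ℤ =>
          ‖∑ j : Fin N, w j (x - latticeEmbed γ) *
            (starRingEnd ℂ) (w j (y - latticeEmbed γ))‖) ∧
        Summable (fun γ : Fin d → ℤ =>
          ‖∑ j : Fin N, Complex.exp (Complex.I * (triangleFlux B (latticeEmbed γ) x y : ℝ)) *
            w j (x - latticeEmbed γ) * (starRingEnd ℂ) (w j (y - latticeEmbed γ))‖)) ∧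
      ∀ x y : EuclideanSpace ℝ (Fin d),
        (1 + ‖x - y‖) ^ m *
          ‖(∑' γ : Fin d → ℤ, ∑ j : Fin N,
              Complex.exp (Complex.I * (triangleFlux B (latticeEmbed γ) x y : ℝ)) *
                w j (x - latticeEmbed γ) * (starRingEnd ℂ) (w j (y - latticeEmbed γ))) -
            (∑' γ : Fin d → ℤ, ∑ j : Fin N,
              w j (x - latticeEmbed γ) * (starRingEnd ℂ) (w j (y - latticeEmbed γ)))‖ ≤
          C * ε := by
  refine ⟨d ^ 2 * (4 ^ d * N * D (m + 1 + 2 * d) ^ 2) * ∑' γ : Fin d → ℤ, latticeWeight γ, ?_⟩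
  intro w _ hw ε hε B _ _ hB
  have hcomp (x y : EuclideanSpace ℝ (Fin d)) :=
    magneticKernel_sub_bandKernel_le x y (hw (m + 1 + 2 * d)) hε hB (B := B)
  exact ⟨fun x y => ⟨(hcomp x y).1, (hcomp x y).2.1⟩, fun x y => (hcomp x y).2.2⟩

/-- The magnetically modified band projection kernel `K_ε` differs from the unperturbed
kernel `K` by `O(ε)`, with rapid off-diagonal decay, uniformly in the field `B` of
size `ε`. -/
theorem magnetic_kernel_comparison (d N : ℕ) (hd : 1 ≤ d) (hN : 1 ≤ N)
    (D : ℕ → ℝ) (m : ℕ) :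
    ∃ C : ℝ, ∀ (w : Fin N → EuclideanSpace ℝ (Fin d) → ℂ),
      (∀ j, Measurable (w j)) →
      (∀ (r : ℕ) (j : Fin N) (x : EuclideanSpace ℝ (Fin d)),
        (1 + ‖x‖) ^ r * ‖w j x‖ ≤ D r) →
      ∀ ε : ℝ, 0 ≤ ε →
      ∀ (B : EuclideanSpace ℝ (Fin d) → Matrix (Fin d) (Fin d) ℝ),
        Continuous B →
        (∀ v j k, B v j k = - B v k j) →
        (∀ j k v, |B v j k| ≤ ε) →
      (∀ x y : EuclideanSpace ℝ (Fin d),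
        Summable (fun γ : Fin d → ℤ =>
          ‖∑ j : Fin N, w j (x - latticeEmbed γ) *
            (starRingEnd ℂ) (w j (y - latticeEmbed γ))‖) ∧
        Summable (fun γ : Fin d → ℤ =>
          ‖∑ j : Fin N, Complex.exp (Complex.I * (triangleFlux B (latticeEmbed γ) x y : ℝ)) *
            w j (x - latticeEmbed γ) * (starRingEnd ℂ) (w j (y - latticeEmbed γ))‖)) ∧
      ∀ x y : EuclideanSpace ℝ (Fin d),
        (1 + ‖x - y‖) ^ m *
          ‖(∑' γ : Fin d → ℤ, ∑ j : Fin N,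
              Complex.exp (Complex.I * (triangleFlux B (latticeEmbed γ) x y : ℝ)) *
                w j (x - latticeEmbed γ) * (starRingEnd ℂ) (w j (y - latticeEmbed γ))) -
            (∑' γ : Fin d → ℤ, ∑ j : Fin N,
              w j (x - latticeEmbed γ) * (starRingEnd ℂ) (w j (y - latticeEmbed γ)))‖ ≤
          C * ε :=
  magnetic_kernel_comparison_general d N D m
end

section
/- Let H be a complex Hilbert space and let P, Q be orthogonal projections on H with ‖P − Q‖ < 1. Set D := P − Q. Then I − D² is a positive invertible operator that commutes with both P and Q, and, denoting by R the unique positive operator with R²(I − D²) = I, the operator U := R·(PQ + (I−P)(I−Q)) is unitary and satisfies U Q = P U. Consequently U maps the range of Q unitarily onto the range of P. -/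
/-!
With `T = 1 - (P - Q)²` and `A = PQ + (1 - P)(1 - Q)`, idempotence alone gives
`A Q = P Q = P A`, `A A* = A* A = T`, and that `T` commutes with `P` and `Q`. Since `‖P - Q‖ < 1`,
`T` is positive and invertible, and any positive `R` with `R² T = 1` is the square root of `T⁻¹`,
hence commutes with everything that commutes with `T`. Then `U = R A` satisfies
`U U* = R T R = 1`, `U* U = A* R² A = A* A R² = 1` and `U Q = R P A = P R A = P U`.
-/

section Ring

variable {R : Type*} [Ring R] {p q : R}

def kato (p q : R) : R := p * q + (1 - p) * (1 - q)

lemma IsIdempotentElem.sub_mul_self_eq (hp : IsIdempotentElem p) (hq : IsIdempotentElem q) :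
    (p - q) * (p - q) = p + q - p * q - q * p := by
  have : (p - q) * (p - q) = p * p + q * q - p * q - q * p := by noncomm_ring
  rw [this, hp.eq, hq.eq]

lemma IsIdempotentElem.commute_one_sub_sub_mul_self_left (hp : IsIdempotentElem p)
    (hq : IsIdempotentElem q) : Commute (1 - (p - q) * (p - q)) p := by
  refine (Commute.one_left p).sub_left ?_
  rw [hp.sub_mul_self_eq hq, Commute, SemiconjBy]
  simp only [add_mul, mul_add, sub_mul, mul_sub, mul_assoc, hp.eq, hp.mul_self_mul]
  abel

lemma IsIdempotentElem.commute_one_sub_sub_mul_self_right (hp : IsIdempotentElem p)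
    (hq : IsIdempotentElem q) : Commute (1 - (p - q) * (p - q)) q := by
  simpa only [← neg_sub p q, neg_mul_neg] using hq.commute_one_sub_sub_mul_self_left hp

lemma IsIdempotentElem.kato_mul (hp : IsIdempotentElem p) (hq : IsIdempotentElem q) :
    kato p q * q = p * kato p q := by
  simp only [kato, add_mul, mul_add, sub_mul, mul_sub, one_mul, mul_one, mul_assoc, hp.eq, hq.eq,
    hp.mul_self_mul]
  abel

lemma IsIdempotentElem.kato_mul_kato (hp : IsIdempotentElem p) (hq : IsIdempotentElem q) :
    kato p q * kato q p = 1 - (p - q) * (p - q) := by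
  rw [hp.sub_mul_self_eq hq]
  simp only [kato, add_mul, mul_add, sub_mul, mul_sub, one_mul, mul_one, mul_assoc, hp.eq, hq.eq,
    hq.mul_self_mul]
  abel

lemma IsIdempotentElem.commute_one_sub_sub_mul_self_kato (hp : IsIdempotentElem p)
    (hq : IsIdempotentElem q) : Commute (1 - (p - q) * (p - q)) (kato p q) := by
  have hcp := hp.commute_one_sub_sub_mul_self_left hq
  have hcq := hp.commute_one_sub_sub_mul_self_right hq
  exact (hcp.mul_right hcq).add_right
    (((Commute.one_right _).sub_right hcp).mul_right ((Commute.one_right _).sub_right hcq))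

end Ring

lemma Function.Semiconj.image_range {α β : Type*} {f : α → β} {ga : α → α} {gb : β → β}
    (h : Function.Semiconj f ga gb) (hf : Function.Surjective f) :
    f '' Set.range ga = Set.range gb := by
  rw [← Set.range_comp, h.comp_eq, Set.range_comp, hf.range_eq, Set.image_univ]

lemma IsSelfAdjoint.star_kato {R : Type*} [Ring R] [StarRing R] {p q : R}
    (hp : IsSelfAdjoint p) (hq : IsSelfAdjoint q) : star (kato p q) = kato q p := by
  simp only [kato, star_add, star_mul, star_sub, star_one, hp.star_eq, hq.star_eq]

lemma mul_mem_unitary_of_mul_self_mul_eq_one {R : Type*} [Ring R] [StarRing R] {r a t : R}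
    (hr : IsSelfAdjoint r) (hrt : r * r * t = 1) (hcrt : Commute r t) (hcra : Commute r a)
    (ha : a * star a = t) (ha' : star a * a = t) : r * a ∈ unitary R := by
  have hrrt : Commute (r * r) t := hcrt.mul_left hcrt
  rw [Unitary.mem_iff, star_mul, hr.star_eq]
  constructor
  · calc star a * r * (r * a) = star a * (r * r * a) := by simp only [mul_assoc]
    _ = star a * a * (r * r) := by rw [(hcra.mul_left hcra).eq, mul_assoc]
    _ = 1 := by rw [ha', ← hrrt.eq, hrt]
  · calc r * a * (star a * r) = r * t * r := by rw [← ha]; simp only [mul_assoc]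
    _ = 1 := by rw [mul_assoc, ← hcrt.eq, ← mul_assoc, hrt]

section CStarAlgebra

variable {A : Type*} [CStarAlgebra A] [PartialOrder A] [StarOrderedRing A]

lemma CStarAlgebra.one_sub_star_mul_self_nonneg {a : A} (ha : ‖a‖ ≤ 1) :
    0 ≤ 1 - star a * a := by
  refine sub_nonneg.mpr ((norm_le_one_iff_of_nonneg _ (star_mul_self_nonneg a)).mp ?_)
  rw [CStarRing.norm_star_mul_self]
  exact mul_le_one₀ ha (norm_nonneg a) ha

lemma Commute.of_mul_self_left {r b : A} (hr : 0 ≤ r) (h : Commute (r * r) b) : Commute r b := by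
  rw [← CFC.sqrt_unique rfl hr, CFC.sqrt_eq_cfc]
  exact h.cfc_nnreal _

lemma exists_nonneg_mul_self_mul_eq_one {t : A} (ht : 0 ≤ t) (hu : IsUnit t) :
    ∃ r : A, 0 ≤ r ∧ r * r * t = 1 := by
  obtain ⟨u, rfl⟩ := hu
  refine ⟨CFC.sqrt ↑u⁻¹, CFC.sqrt_nonneg _, ?_⟩
  rw [CFC.sqrt_mul_sqrt_self _ (CFC.inv_nonneg_of_nonneg u ht), u.inv_mul]

lemma Commute.of_mul_self_mul_eq_one {r t b : A} (hr : 0 ≤ r) (ht : IsUnit t)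
    (hrt : r * r * t = 1) (htb : Commute t b) : Commute r b := by
  obtain ⟨u, rfl⟩ := ht
  refine Commute.of_mul_self_left hr ?_
  rw [← u.inv_eq_of_mul_eq_one_left hrt]
  exact htb.units_inv_left

end CStarAlgebra

/-- Sz.-Nagy / Kato construction: if `P`, `Q` are orthogonal projections with
`‖P - Q‖ < 1`, then `I - (P-Q)²` is positive, invertible and commutes with `P` and `Q`,
and for `R` the (unique) positive operator with `R²(I - (P-Q)²) = I`, the operator
`U = R (PQ + (I-P)(I-Q))` is unitary and intertwines `Q` with `P`, mapping the range
of `Q` onto the range of `P`. -/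
theorem szNagy_intertwiner
    {H : Type*} [NormedAddCommGroup H] [InnerProductSpace ℂ H] [CompleteSpace H]
    (P Q : H →L[ℂ] H)
    (hP : IsSelfAdjoint P) (hP2 : P * P = P)
    (hQ : IsSelfAdjoint Q) (hQ2 : Q * Q = Q)
    (hPQ : ‖P - Q‖ < 1) :
    ((1 : H →L[ℂ] H) - (P - Q) * (P - Q)).IsPositive ∧
    IsUnit ((1 : H →L[ℂ] H) - (P - Q) * (P - Q)) ∧
    Commute ((1 : H →L[ℂ] H) - (P - Q) * (P - Q)) P ∧
    Commute ((1 : H →L[ℂ] H) - (P - Q) * (P - Q)) Q ∧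
    (∃ R : H →L[ℂ] H, R.IsPositive ∧
      R * R * ((1 : H →L[ℂ] H) - (P - Q) * (P - Q)) = 1) ∧
    ∀ R : H →L[ℂ] H, R.IsPositive →
      R * R * ((1 : H →L[ℂ] H) - (P - Q) * (P - Q)) = 1 →
      (R * (P * Q + (1 - P) * (1 - Q))) ∈ unitary (H →L[ℂ] H) ∧
      (R * (P * Q + (1 - P) * (1 - Q))) * Q = P * (R * (P * Q + (1 - P) * (1 - Q))) ∧
      (⇑(R * (P * Q + (1 - P) * (1 - Q)))) '' Set.range (⇑Q) = Set.range (⇑P) := by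
  have hPi : IsIdempotentElem P := hP2
  have hQi : IsIdempotentElem Q := hQ2
  have hT0 : 0 ≤ 1 - (P - Q) * (P - Q) := by
    simpa only [(hP.sub hQ).star_eq] using CStarAlgebra.one_sub_star_mul_self_nonneg hPQ.le
  have hTu : IsUnit (1 - (P - Q) * (P - Q)) := isUnit_one_sub_of_norm_lt_one <|
    (norm_mul_le _ _).trans_lt (mul_lt_one_of_nonneg_of_lt_one_left (norm_nonneg _) hPQ hPQ.le)
  have hTP := hPi.commute_one_sub_sub_mul_self_left hQi
  refine ⟨(ContinuousLinearMap.nonneg_iff_isPositive _).mp hT0, hTu, hTP,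
    hPi.commute_one_sub_sub_mul_self_right hQi, ?_, fun R hR hRT => ?_⟩
  · obtain ⟨R, hR0, hRT⟩ := exists_nonneg_mul_self_mul_eq_one hT0 hTu
    exact ⟨R, (ContinuousLinearMap.nonneg_iff_isPositive R).mp hR0, hRT⟩
  have hR0 : 0 ≤ R := (ContinuousLinearMap.nonneg_iff_isPositive R).mpr hR
  have hRcomm : ∀ B, Commute (1 - (P - Q) * (P - Q)) B → Commute R B :=
    fun _ => .of_mul_self_mul_eq_one hR0 hTu hRT
  have hU : R * kato P Q ∈ unitary (H →L[ℂ] H) :=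
    mul_mem_unitary_of_mul_self_mul_eq_one (.of_nonneg hR0) hRT (hRcomm _ (.refl _))
      (hRcomm _ (hPi.commute_one_sub_sub_mul_self_kato hQi))
      (by rw [hP.star_kato hQ, hPi.kato_mul_kato hQi])
      (by rw [hP.star_kato hQ, hQi.kato_mul_kato hPi, ← neg_sub P Q, neg_mul_neg])
  have hUQ : R * kato P Q * Q = P * (R * kato P Q) := by
    rw [mul_assoc, hPi.kato_mul hQi, ← mul_assoc, (hRcomm P hTP).eq, mul_assoc]
  have hUsurj : Function.Surjective (R * kato P Q) := fun y =>
    ⟨star (R * kato P Q) y, DFunLike.congr_fun (Unitary.mul_star_self_of_mem hU) y⟩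
  exact ⟨hU, hUQ, Function.Semiconj.image_range (fun x => DFunLike.congr_fun hUQ x) hUsurj⟩
end

section
/- Let d ≥ 1, N ≥ 1, m ∈ ℕ, and let X = (X_{αβ}) and Y = (Y_{αβ}), α, β ∈ ℤ^d, be families of N×N complex matrices such that ‖X_{αβ}‖ ≤ C_X (1+|α−β|)^{−(m+d+1)} and ‖Y_{αβ}‖ ≤ C_Y (1+|α−β|)^{−(m+d+1)} for all α, β, with finite constants C_X, C_Y. Then for all α, β the series Z_{αβ} := Σ_{γ∈ℤ^d} X_{αγ} Y_{γβ} converges absolutely, and there is a constant K < ∞ depending only on m and d (for instance K = 2^m Σ_{γ∈ℤ^d} (1+|γ|)^{−(d+1)}) such that ‖Z_{αβ}‖ ≤ K C_X C_Y (1+|α−β|)^{−m} for all α, β ∈ ℤ^d. -/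
/-- The operator norm of an `N × N` complex matrix, via its action on `ℂ^N`. -/
noncomputable def mnorm {N : ℕ} (M : Matrix (Fin N) (Fin N) ℂ) : ℝ :=
  ‖Matrix.toEuclideanCLM (𝕜 := ℂ) (n := Fin N) M‖

section Weights

variable {E : Type*} [SeminormedAddCommGroup E]

theorem one_add_norm_sub_le_mul (a b c : E) :
    1 + ‖a - b‖ ≤ (1 + ‖a - c‖) * (1 + ‖c - b‖) := by
  nlinarith [norm_sub_le_norm_sub_add_norm_sub a c b, norm_nonneg (a - c), norm_nonneg (c - b)]

theorem inv_one_add_norm_sub_pow_mul_le (a b c : E) (m k : ℕ) :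
    ((1 + ‖a - c‖) ^ (m + k))⁻¹ * ((1 + ‖c - b‖) ^ (m + k))⁻¹ ≤
      ((1 + ‖a - b‖) ^ m)⁻¹ * ((1 + ‖a - c‖) ^ k)⁻¹ := by
  have hcb : 1 ≤ 1 + ‖c - b‖ := le_add_of_nonneg_right (norm_nonneg _)
  rw [← mul_inv, ← mul_inv]
  refine inv_anti₀ (by positivity) ?_
  calc (1 + ‖a - b‖) ^ m * (1 + ‖a - c‖) ^ k
      ≤ ((1 + ‖a - c‖) * (1 + ‖c - b‖)) ^ m * (1 + ‖a - c‖) ^ k := by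
        gcongr
        exact one_add_norm_sub_le_mul a b c
    _ = (1 + ‖a - c‖) ^ (m + k) * (1 + ‖c - b‖) ^ m := by
        rw [mul_pow, pow_add]; ring
    _ ≤ (1 + ‖a - c‖) ^ (m + k) * (1 + ‖c - b‖) ^ (m + k) := by
        gcongr _ * ?_
        exact pow_le_pow_right₀ hcb (Nat.le_add_right m k)

end Weights

theorem ZLattice.summable_inv_one_add_norm_pow {E : Type*} [NormedAddCommGroup E]
    [NormedSpace ℝ E] [FiniteDimensional ℝ E] (L : Submodule ℤ E) [DiscreteTopology L] {n : ℕ}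
    (hn : Module.finrank ℤ L < n) : Summable fun z : L => ((1 + ‖z‖) ^ n)⁻¹ := by
  refine (ZLattice.summable_norm_pow_inv L n hn).of_norm_bounded_eventually ?_
  filter_upwards [Filter.eventually_cofinite_ne 0] with z hz
  have hz : 0 < ‖z‖ := norm_pos_iff.mpr hz
  rw [Real.norm_of_nonneg (by positivity), inv_pow]
  gcongr
  linarith

theorem latticeEmbed_sub {d : ℕ} (α β : Fin d → ℤ) :
    latticeEmbed α - latticeEmbed β = latticeEmbed (α - β) := by
  ext i
  simp [latticeEmbed]

/-- `latticeEmbed` parametrizes the `ℤ`-span of the standard basis of `ℝ^d`, a lattice of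
rank `d`. -/
theorem summable_inv_one_add_norm_latticeEmbed_pow {d n : ℕ} (hn : d < n) :
    Summable fun γ : Fin d → ℤ => ((1 + ‖latticeEmbed γ‖) ^ n)⁻¹ := by
  let b := (EuclideanSpace.basisFun (Fin d) ℝ).toBasis
  let e := (b.restrictScalars ℤ).equivFun.symm
  have he : ∀ γ, (e γ : EuclideanSpace ℝ (Fin d)) = latticeEmbed γ := by
    intro γ
    simp only [e, Module.Basis.equivFun_symm_apply, Submodule.coe_sum,
      Submodule.coe_smul_of_tower, Module.Basis.restrictScalars_apply]
    ext i
    simp [b, latticeEmbed, Pi.single_apply]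
  have hrank : Module.finrank ℤ (Submodule.span ℤ (Set.range b)) = d := by
    simp [Module.finrank_eq_card_basis (b.restrictScalars ℤ)]
  have hL := ZLattice.summable_inv_one_add_norm_pow _ (hrank ▸ hn)
  simpa [Function.comp_def, ← he] using hL.comp_injective e.injective

theorem summable_norm_mul_and_norm_tsum_mul_le {ι R : Type*} [NormedRing R] {x y : ι → R}
    {g : ι → ℝ} (hg : Summable g) (h : ∀ i, ‖x i‖ * ‖y i‖ ≤ g i) :
    Summable (fun i => ‖x i * y i‖) ∧ ‖∑' i, x i * y i‖ ≤ ∑' i, g i := by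
  have hxy : ∀ i, ‖x i * y i‖ ≤ g i := fun i => (norm_mul_le _ _).trans (h i)
  exact ⟨hg.of_nonneg_of_le (fun _ => norm_nonneg _) hxy, tsum_of_norm_bounded hg.hasSum hxy⟩

theorem summable_norm_mul_and_norm_tsum_mul_le_of_decay {R : Type*} [NormedRing R] {d : ℕ}
    (m : ℕ) (X Y : (Fin d → ℤ) → (Fin d → ℤ) → R) (CX CY : ℝ)
    (hX : ∀ α β, ‖X α β‖ ≤ CX * ((1 + ‖latticeEmbed α - latticeEmbed β‖) ^ (m + d + 1))⁻¹)
    (hY : ∀ α β, ‖Y α β‖ ≤ CY * ((1 + ‖latticeEmbed α - latticeEmbed β‖) ^ (m + d + 1))⁻¹)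
    (α β : Fin d → ℤ) :
    Summable (fun γ => ‖X α γ * Y γ β‖) ∧
      ‖∑' γ, X α γ * Y γ β‖ ≤ (∑' γ : Fin d → ℤ, ((1 + ‖latticeEmbed γ‖) ^ (d + 1))⁻¹) * CX * CY *
        ((1 + ‖latticeEmbed α - latticeEmbed β‖) ^ m)⁻¹ := by
  set w : (Fin d → ℤ) → ℝ := fun γ => ((1 + ‖latticeEmbed γ‖) ^ (d + 1))⁻¹
  set c := ((1 + ‖latticeEmbed α - latticeEmbed β‖) ^ m)⁻¹
  have hCX : 0 ≤ CX := nonneg_of_mul_nonneg_left ((norm_nonneg _).trans (hX α α)) (by positivity)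
  have hCY : 0 ≤ CY := nonneg_of_mul_nonneg_left ((norm_nonneg _).trans (hY α α)) (by positivity)
  have hbound : ∀ γ, ‖X α γ‖ * ‖Y γ β‖ ≤ CX * CY * c * w (α - γ) := fun γ =>
    calc ‖X α γ‖ * ‖Y γ β‖
        ≤ (CX * ((1 + ‖latticeEmbed α - latticeEmbed γ‖) ^ (m + d + 1))⁻¹) *
          (CY * ((1 + ‖latticeEmbed γ - latticeEmbed β‖) ^ (m + d + 1))⁻¹) :=
          mul_le_mul (hX α γ) (hY γ β) (norm_nonneg _) ((norm_nonneg _).trans (hX α γ))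
      _ = CX * CY * (((1 + ‖latticeEmbed α - latticeEmbed γ‖) ^ (m + (d + 1)))⁻¹ *
          ((1 + ‖latticeEmbed γ - latticeEmbed β‖) ^ (m + (d + 1)))⁻¹) := by ring
      _ ≤ CX * CY * (c * ((1 + ‖latticeEmbed α - latticeEmbed γ‖) ^ (d + 1))⁻¹) :=
          mul_le_mul_of_nonneg_left (inv_one_add_norm_sub_pow_mul_le _ _ _ m (d + 1))
            (by positivity)
      _ = CX * CY * c * w (α - γ) := by rw [latticeEmbed_sub, mul_assoc _ c]
  have hw : Summable fun γ => w (α - γ) :=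
    (Equiv.subLeft α).summable_iff.mpr (summable_inv_one_add_norm_latticeEmbed_pow d.lt_succ_self)
  have hshift : ∑' γ, CX * CY * c * w (α - γ) = (∑' γ, w γ) * CX * CY * c := by
    rw [tsum_mul_left, show ∑' γ, w (α - γ) = ∑' γ, w γ from (Equiv.subLeft α).tsum_eq w]
    ring
  exact hshift ▸ summable_norm_mul_and_norm_tsum_mul_le (hw.mul_left _) hbound

theorem matrix_convolution_decay_general (d : ℕ) (m : ℕ) :
    ∃ K : ℝ, ∀ (N : ℕ), 1 ≤ N →
      ∀ (X Y : (Fin d → ℤ) → (Fin d → ℤ) → Matrix (Fin N) (Fin N) ℂ) (CX CY : ℝ),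
      (∀ α β, mnorm (X α β) ≤
        CX * ((1 + ‖latticeEmbed α - latticeEmbed β‖) ^ (m + d + 1))⁻¹) →
      (∀ α β, mnorm (Y α β) ≤
        CY * ((1 + ‖latticeEmbed α - latticeEmbed β‖) ^ (m + d + 1))⁻¹) →
      ∀ α β : Fin d → ℤ,
        Summable (fun γ : Fin d → ℤ => mnorm (X α γ * Y γ β)) ∧
        mnorm (∑' γ : Fin d → ℤ, X α γ * Y γ β) ≤
          K * CX * CY * ((1 + ‖latticeEmbed α - latticeEmbed β‖) ^ m)⁻¹ := by
  refine ⟨∑' γ : Fin d → ℤ, ((1 + ‖latticeEmbed γ‖) ^ (d + 1))⁻¹,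
    fun N _ X Y CX CY hX hY => ?_⟩
  -- `mnorm` is by definition the norm of the L² operator-norm structure on matrices.
  let _ : NormedRing (Matrix (Fin N) (Fin N) ℂ) := Matrix.instL2OpNormedRing
  exact summable_norm_mul_and_norm_tsum_mul_le_of_decay m X Y CX CY hX hY

/-- Rapid off-diagonal decay of lattice matrices is stable under composition: if the
entries of `X` and `Y` decay at rate `(1+|α-β|)^{-(m+d+1)}`, then the entries of the
product `Z_{αβ} = Σ_γ X_{αγ} Y_{γβ}` (an absolutely convergent series) decay at rate
`(1+|α-β|)^{-m}`, with a constant depending only on `m` and `d`. -/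
theorem matrix_convolution_decay (d : ℕ) (hd : 1 ≤ d) (m : ℕ) :
    ∃ K : ℝ, ∀ (N : ℕ), 1 ≤ N →
      ∀ (X Y : (Fin d → ℤ) → (Fin d → ℤ) → Matrix (Fin N) (Fin N) ℂ) (CX CY : ℝ),
      (∀ α β, mnorm (X α β) ≤
        CX * ((1 + ‖latticeEmbed α - latticeEmbed β‖) ^ (m + d + 1))⁻¹) →
      (∀ α β, mnorm (Y α β) ≤
        CY * ((1 + ‖latticeEmbed α - latticeEmbed β‖) ^ (m + d + 1))⁻¹) →
      ∀ α β : Fin d → ℤ,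
        Summable (fun γ : Fin d → ℤ => mnorm (X α γ * Y γ β)) ∧
        mnorm (∑' γ : Fin d → ℤ, X α γ * Y γ β) ≤
          K * CX * CY * ((1 + ‖latticeEmbed α - latticeEmbed β‖) ^ m)⁻¹ :=
  matrix_convolution_decay_general d m
end
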